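/- arXiv:2312.06204 — 6 statements merged into one kernel-verified Lean document; each statement's English description precedes it below -/
import Mathlib

section
/- Let X be a real N×P matrix and C a real N×L matrix such that the block matrix W₁ = [X C] has full column rank P+L. Then both X and C have full column rank, the matrices Xᵀ(I_N − P_C)X and Cᵀ(I_N − P_X)C are invertible, and for any β_X ∈ ℝ^P, β_C ∈ ℝ^L, ε ∈ ℝ^N and y = Xβ_X + Cβ_C + ε, the estimators β̂_X := (Xᵀ(I_N − P_C)X)⁻¹Xᵀ(I_N − P_C)y and β̂_C := (Cᵀ(I_N − P_X)C)⁻¹Cᵀ(I_N − P_X)y satisfy β̂_X − β_X = (Xᵀ(I_N − P_C)X)⁻¹Xᵀ(I_N − P_C)ε and β̂_C − β_C = (Cᵀ(I_N − P_X)C)⁻¹Cᵀ(I_N − P_X)ε. -/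
open Matrix

/-- The orthogonal projection matrix onto the column space of `M`:
`P_M = M (Mᵀ M)⁻¹ Mᵀ`. -/
noncomputable def proj {N K : ℕ} (M : Matrix (Fin N) (Fin K) ℝ) :
    Matrix (Fin N) (Fin N) ℝ :=
  M * (Mᵀ * M)⁻¹ * Mᵀ

/-!
Full column rank of `[X C]` means that `X v + C w = 0` forces `v = w = 0`. Hence the residuals
`(I - P_C) X` of `X` after partialling out `C` still have independent columns, and since
`I - P_C` is a symmetric idempotent, `Xᵀ (I - P_C) X` is their Gram matrix, hence invertible.
As `(I - P_C) C = 0`, the term `C β_C` drops out of `Xᵀ (I - P_C) y`, which leaves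
`Xᵀ (I - P_C) X β_X` plus the noise term. The roles of `X` and `C` are symmetric.
-/

namespace Matrix

variable {m n k l R K : Type*}

theorem rank_eq_card_iff_mulVec_injective [Fintype n] [Field K] (A : Matrix m n K) :
    A.rank = Fintype.card n ↔ Function.Injective A.mulVec := by
  rw [mulVec_injective_iff, linearIndependent_iff_card_eq_finrank_span,
    rank_eq_finrank_span_cols, Set.finrank, eq_comm]

theorem isUnit_transpose_mul_self [Fintype m] [Fintype n] [DecidableEq n] [Field K]
    [LinearOrder K] [IsStrictOrderedRing K] {A : Matrix m n K} (hA : Function.Injective A.mulVec) :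
    IsUnit (Aᵀ * A) := by
  rwa [← mulVec_injective_iff_isUnit, ← rank_eq_card_iff_mulVec_injective,
    rank_transpose_mul_self, rank_eq_card_iff_mulVec_injective]

theorem eq_zero_of_mulVec_add_mulVec_eq_zero [Fintype n] [Fintype k] [Ring R]
    {A : Matrix m n R} {B : Matrix m k R} (h : Function.Injective (fromCols A B).mulVec)
    {v : n → R} {w : k → R} (hvw : A *ᵥ v + B *ᵥ w = 0) : v = 0 ∧ w = 0 := by
  rw [← fromCols_mulVec_sumElim, ← mulVec_zero (fromCols A B), ← Sum.elim_zero_zero] at hvw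
  exact Sum.elim_eq_iff.1 (h hvw)

theorem mulVec_injective_of_forall_mulVec_add_mulVec_eq_zero [Fintype n] [Fintype k]
    [CommRing R] {A : Matrix m n R} {B : Matrix m k R}
    (h : ∀ v w, A *ᵥ v + B *ᵥ w = 0 → v = 0 ∧ w = 0) :
    Function.Injective A.mulVec ∧ Function.Injective B.mulVec :=
  ⟨(injective_iff_map_eq_zero A.mulVecLin).2 fun v hv => (h v 0 (by simpa using hv)).1,
    (injective_iff_map_eq_zero B.mulVecLin).2 fun w hw => (h 0 w (by simpa using hw)).2⟩

theorem transpose_mul_mul_eq_of_isIdempotentElem [Fintype m] [CommRing R] {Q : Matrix m m R}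
    (hQ : Qᵀ = Q) (hQQ : IsIdempotentElem Q) (A : Matrix m n R) :
    Aᵀ * Q * A = (Q * A)ᵀ * (Q * A) := by
  rw [transpose_mul, hQ, Matrix.mul_assoc Aᵀ Q (Q * A), ← Matrix.mul_assoc Q Q A, hQQ.eq,
    Matrix.mul_assoc]

theorem nonsing_inv_mulVec_mulVec_sub_eq [Fintype n] [Fintype k] [Fintype l] [DecidableEq k]
    [CommRing R]
    {A : Matrix k n R} {X : Matrix n k R} {C : Matrix n l R} (hAX : IsUnit (A * X))
    (hAC : A * C = 0) (β : k → R) (γ : l → R) (ε : n → R) :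
    (A * X)⁻¹ *ᵥ (A *ᵥ (X *ᵥ β + C *ᵥ γ + ε)) - β = (A * X)⁻¹ *ᵥ (A *ᵥ ε) := by
  have hA : A *ᵥ (X *ᵥ β + C *ᵥ γ + ε) = (A * X) *ᵥ β + A *ᵥ ε := by
    rw [mulVec_add, mulVec_add, mulVec_mulVec, mulVec_mulVec, hAC, zero_mulVec, add_zero]
  rw [hA, mulVec_add, mulVec_mulVec, nonsing_inv_mul _ ((isUnit_iff_isUnit_det _).1 hAX),
    one_mulVec, add_sub_cancel_left]

end Matrix

section Projection

variable {N K L : ℕ}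

theorem transpose_proj (M : Matrix (Fin N) (Fin K) ℝ) : (proj M)ᵀ = proj M := by
  rw [proj, transpose_mul, transpose_mul, transpose_transpose, transpose_nonsing_inv,
    transpose_mul, transpose_transpose, Matrix.mul_assoc]

theorem proj_mul_self {M : Matrix (Fin N) (Fin K) ℝ} (hM : Function.Injective M.mulVec) :
    proj M * M = M := by
  have hMM := (isUnit_iff_isUnit_det _).1 (isUnit_transpose_mul_self hM)
  rw [proj, Matrix.mul_assoc, Matrix.mul_assoc, nonsing_inv_mul _ hMM, Matrix.mul_one]

theorem isIdempotentElem_proj {M : Matrix (Fin N) (Fin K) ℝ}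
    (hM : Function.Injective M.mulVec) : IsIdempotentElem (proj M) := by
  calc proj M * proj M = proj M * M * (Mᵀ * M)⁻¹ * Mᵀ := by simp only [proj, Matrix.mul_assoc]
    _ = proj M := by rw [proj_mul_self hM, proj]

theorem one_sub_proj_mul_self {M : Matrix (Fin N) (Fin K) ℝ}
    (hM : Function.Injective M.mulVec) : (1 - proj M) * M = 0 := by
  rw [Matrix.sub_mul, Matrix.one_mul, proj_mul_self hM, sub_self]

theorem isUnit_transpose_mul_one_sub_proj_mul {X : Matrix (Fin N) (Fin K) ℝ}
    {C : Matrix (Fin N) (Fin L) ℝ}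
    (h : ∀ v w, X *ᵥ v + C *ᵥ w = 0 → v = 0 ∧ w = 0) :
    IsUnit (Xᵀ * (1 - proj C) * X) := by
  have hC := (mulVec_injective_of_forall_mulVec_add_mulVec_eq_zero h).2
  have hQX : Function.Injective ((1 - proj C) * X).mulVec := by
    refine (injective_iff_map_eq_zero ((1 - proj C) * X).mulVecLin).2 fun v hv => ?_
    have hres : X *ᵥ v + C *ᵥ (-(((Cᵀ * C)⁻¹ * Cᵀ * X) *ᵥ v)) = ((1 - proj C) * X) *ᵥ v := by
      rw [mulVec_neg, ← sub_eq_add_neg, mulVec_mulVec, Matrix.sub_mul, Matrix.one_mul,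
        sub_mulVec, proj]
      simp only [Matrix.mul_assoc]
    exact (h _ _ (hres.trans hv)).1
  have hQ : (1 - proj C)ᵀ = 1 - proj C := by rw [transpose_sub, transpose_one, transpose_proj]
  rw [transpose_mul_mul_eq_of_isIdempotentElem hQ (isIdempotentElem_proj hC).one_sub]
  exact isUnit_transpose_mul_self hQX

end Projection

/-- If `W₁ = [X, C]` has full column rank, then `X` and `C` have full column rank,
`Xᵀ(I - P_C)X` and `Cᵀ(I - P_X)C` are invertible, and with `y = Xβ_X + Cβ_C + ε`, the OLS
estimators satisfy `β̂_X - β_X = (Xᵀ(I - P_C)X)⁻¹ Xᵀ(I - P_C) ε` and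
`β̂_C - β_C = (Cᵀ(I - P_X)C)⁻¹ Cᵀ(I - P_X) ε`. -/
theorem ols_estimator_error_repr
    (N P L : ℕ) (X : Matrix (Fin N) (Fin P) ℝ) (C : Matrix (Fin N) (Fin L) ℝ)
    (hW : (Matrix.fromCols X C).rank = P + L)
    (βX : Fin P → ℝ) (βC : Fin L → ℝ) (ε : Fin N → ℝ) (y : Fin N → ℝ)
    (hy : y = X.mulVec βX + C.mulVec βC + ε) :
    X.rank = P ∧ C.rank = L ∧
    IsUnit (Xᵀ * ((1 : Matrix (Fin N) (Fin N) ℝ) - proj C) * X) ∧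
    IsUnit (Cᵀ * ((1 : Matrix (Fin N) (Fin N) ℝ) - proj X) * C) ∧
    ((Xᵀ * ((1 : Matrix (Fin N) (Fin N) ℝ) - proj C) * X)⁻¹).mulVec
        ((Xᵀ * ((1 : Matrix (Fin N) (Fin N) ℝ) - proj C)).mulVec y) - βX
      = ((Xᵀ * ((1 : Matrix (Fin N) (Fin N) ℝ) - proj C) * X)⁻¹).mulVec
        ((Xᵀ * ((1 : Matrix (Fin N) (Fin N) ℝ) - proj C)).mulVec ε) ∧
    ((Cᵀ * ((1 : Matrix (Fin N) (Fin N) ℝ) - proj X) * C)⁻¹).mulVec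
        ((Cᵀ * ((1 : Matrix (Fin N) (Fin N) ℝ) - proj X)).mulVec y) - βC
      = ((Cᵀ * ((1 : Matrix (Fin N) (Fin N) ℝ) - proj X) * C)⁻¹).mulVec
        ((Cᵀ * ((1 : Matrix (Fin N) (Fin N) ℝ) - proj X)).mulVec ε) := by
  have hW' : Function.Injective (fromCols X C).mulVec := by
    rw [← rank_eq_card_iff_mulVec_injective, hW, Fintype.card_sum, Fintype.card_fin,
      Fintype.card_fin]
  have hXC : ∀ v w, X *ᵥ v + C *ᵥ w = 0 → v = 0 ∧ w = 0 := fun _ _ =>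
    eq_zero_of_mulVec_add_mulVec_eq_zero hW'
  have hCX : ∀ w v, C *ᵥ w + X *ᵥ v = 0 → w = 0 ∧ v = 0 := fun w v h =>
    (hXC v w (by rwa [add_comm])).symm
  obtain ⟨hX, hC⟩ := mulVec_injective_of_forall_mulVec_add_mulVec_eq_zero hXC
  have hUX := isUnit_transpose_mul_one_sub_proj_mul hXC
  have hUC := isUnit_transpose_mul_one_sub_proj_mul hCX
  refine ⟨by simpa using (rank_eq_card_iff_mulVec_injective X).2 hX,
    by simpa using (rank_eq_card_iff_mulVec_injective C).2 hC, hUX, hUC, ?_, ?_⟩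
  · rw [hy]
    exact nonsing_inv_mulVec_mulVec_sub_eq hUX
      (by rw [Matrix.mul_assoc, one_sub_proj_mul_self hC, Matrix.mul_zero]) βX βC ε
  · rw [hy, add_comm (X *ᵥ βX)]
    exact nonsing_inv_mulVec_mulVec_sub_eq hUC
      (by rw [Matrix.mul_assoc, one_sub_proj_mul_self hX, Matrix.mul_zero]) βC βX ε
end

section
/- Let X be a real N×P matrix and C a real N×L matrix such that the block matrix [X C] has full column rank P+L. Then (Xᵀ(I_N − P_C)X)⁻¹ = (XᵀX)⁻¹ + (XᵀX)⁻¹XᵀC(Cᵀ(I_N − P_X)C)⁻¹CᵀX(XᵀX)⁻¹. -/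
/-!
With `A = XᵀX`, `B = XᵀC`, `D = CᵀC`, the Gram matrix of `[X C]` is the block matrix
`[[A, B], [Bᵀ, D]]`, positive definite by the rank hypothesis. Both inverted matrices in the
statement are Schur complements, `Xᵀ(I - P_C)X = A - B D⁻¹ Bᵀ` and `Cᵀ(I - P_X)C = D - Bᵀ A⁻¹ B`,
so the identity is the Woodbury formula for `(A - B D⁻¹ Bᵀ)⁻¹`. Its invertibility hypotheses hold
because diagonal blocks and Schur complements of a positive definite block matrix are positive
definite.
-/

open Matrix

namespace Matrix

theorem mulVec_injective_of_rank_eq_card {K m n : Type*} [Field K] [Fintype n]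
    {M : Matrix m n K} (h : M.rank = Fintype.card n) : Function.Injective M.mulVec := by
  rw [mulVec_injective_iff, linearIndependent_iff_card_eq_finrank_span, Set.finrank,
    ← rank_eq_finrank_span_cols, h]

theorem conjTranspose_fromCols_mul_fromCols {R m n₁ n₂ : Type*} [Fintype m] [Semiring R]
    [StarRing R] (X : Matrix m n₁ R) (C : Matrix m n₂ R) :
    (fromCols X C)ᴴ * fromCols X C = fromBlocks (Xᴴ * X) (Xᴴ * C) (Xᴴ * C)ᴴ (Cᴴ * C) := by
  rw [conjTranspose_fromCols_eq_fromRows_conjTranspose, fromRows_mul_fromCols,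
    conjTranspose_mul, conjTranspose_conjTranspose]

theorem PosDef.fromBlocks_topLeft {R m n : Type*} [Ring R] [PartialOrder R] [StarRing R]
    {A : Matrix m m R} {B : Matrix m n R} {C : Matrix n m R}
    {D : Matrix n n R} (h : (fromBlocks A B C D).PosDef) : A.PosDef :=
  h.submatrix Sum.inl_injective

theorem PosDef.fromBlocks_bottomRight {R m n : Type*} [Ring R] [PartialOrder R] [StarRing R]
    {A : Matrix m m R} {B : Matrix m n R} {C : Matrix n m R}
    {D : Matrix n n R} (h : (fromBlocks A B C D).PosDef) : D.PosDef :=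
  h.submatrix Sum.inr_injective

section SchurComplement

variable {K m n : Type*} [Field K] [PartialOrder K] [StarRing K] [Fintype m] [Fintype n]
  [DecidableEq m] [DecidableEq n]

-- The Schur complement is the compression of the block matrix along the injective map
-- `y ↦ (-A⁻¹ B y, y)`.
theorem PosDef.schur_complement₁₁ {A : Matrix m m K} {B : Matrix m n K} {D : Matrix n n K}
    (h : (fromBlocks A B Bᴴ D).PosDef) : (D - Bᴴ * A⁻¹ * B).PosDef := by
  have hA : A * A⁻¹ = 1 :=
    mul_nonsing_inv A ((isUnit_iff_isUnit_det A).mp h.fromBlocks_topLeft.isUnit)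
  set E : Matrix (m ⊕ n) n K := fromRows (-(A⁻¹ * B)) 1
  have hE : Function.Injective E.mulVec := fun v w hvw => by
    simpa [E] using congrArg (· ∘ Sum.inr) hvw
  have hEGE : Eᴴ * fromBlocks A B Bᴴ D * E = D - Bᴴ * A⁻¹ * B := by
    have hA0 : A * -(A⁻¹ * B) + B * (1 : Matrix n n K) = 0 := by
      rw [Matrix.mul_neg, ← Matrix.mul_assoc, hA, Matrix.one_mul, Matrix.mul_one, neg_add_cancel]
    rw [Matrix.mul_assoc, fromBlocks_mul_fromRows, hA0,
      conjTranspose_fromRows_eq_fromCols_conjTranspose, fromCols_mul_fromRows]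
    simp only [Matrix.mul_zero, zero_add, conjTranspose_one, Matrix.one_mul, Matrix.mul_one,
      Matrix.mul_neg, Matrix.mul_assoc, neg_add_eq_sub]
  exact hEGE ▸ h.conjTranspose_mul_mul_same hE

end SchurComplement

theorem inv_sub_mul_inv_mul_eq {R n m : Type*} [CommRing R] [Fintype n] [DecidableEq n]
    [Fintype m] [DecidableEq m] (A : Matrix n n R) (U : Matrix n m R) (D : Matrix m m R)
    (V : Matrix m n R) (hA : IsUnit A) (hD : IsUnit D) (hS : IsUnit (D - V * A⁻¹ * U)) :
    (A - U * D⁻¹ * V)⁻¹ = A⁻¹ + A⁻¹ * U * (D - V * A⁻¹ * U)⁻¹ * V * A⁻¹ := by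
  have hDD : (D⁻¹)⁻¹ = D := nonsing_inv_nonsing_inv D ((isUnit_iff_isUnit_det D).mp hD)
  have h := add_mul_mul_inv_eq_sub A U D⁻¹ (-V) hA (isUnit_nonsing_inv_iff.mpr hD)
    (by rwa [hDD, Matrix.neg_mul, Matrix.neg_mul, ← sub_eq_add_neg])
  simpa only [hDD, Matrix.neg_mul, Matrix.mul_neg, ← sub_eq_add_neg, sub_neg_eq_add] using h

end Matrix

theorem transpose_mul_one_sub_proj_mul {N K P Q : ℕ} (M : Matrix (Fin N) (Fin K) ℝ)
    (Y : Matrix (Fin N) (Fin P) ℝ) (Z : Matrix (Fin N) (Fin Q) ℝ) :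
    Yᵀ * (1 - proj M) * Z = Yᵀ * Z - Yᵀ * M * (Mᵀ * M)⁻¹ * (Mᵀ * Z) := by
  simp only [proj, Matrix.mul_sub, Matrix.sub_mul, Matrix.mul_one, Matrix.mul_assoc]

/-- If `[X, C]` has full column rank, then
`(Xᵀ(I - P_C)X)⁻¹ = (XᵀX)⁻¹ + (XᵀX)⁻¹XᵀC(Cᵀ(I - P_X)C)⁻¹CᵀX(XᵀX)⁻¹`. -/
theorem inv_XtPerpCX_eq
    (N P L : ℕ) (X : Matrix (Fin N) (Fin P) ℝ) (C : Matrix (Fin N) (Fin L) ℝ)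
    (hW : (Matrix.fromCols X C).rank = P + L) :
    (Xᵀ * ((1 : Matrix (Fin N) (Fin N) ℝ) - proj C) * X)⁻¹
      = (Xᵀ * X)⁻¹ + (Xᵀ * X)⁻¹ * Xᵀ * C *
          (Cᵀ * ((1 : Matrix (Fin N) (Fin N) ℝ) - proj X) * C)⁻¹ * Cᵀ * X * (Xᵀ * X)⁻¹ := by
  have hG : (fromBlocks (Xᵀ * X) (Xᵀ * C) (Xᵀ * C)ᴴ (Cᵀ * C)).PosDef := by
    have := PosDef.conjTranspose_mul_self _
      (mulVec_injective_of_rank_eq_card (hW.trans (Fintype.card_sum.trans (by simp)).symm))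
    rwa [conjTranspose_fromCols_mul_fromCols, conjTranspose_eq_transpose_of_trivial X,
      conjTranspose_eq_transpose_of_trivial C] at this
  have hS := hG.schur_complement₁₁
  rw [conjTranspose_eq_transpose_of_trivial, transpose_mul, transpose_transpose] at hS
  rw [transpose_mul_one_sub_proj_mul, transpose_mul_one_sub_proj_mul,
    inv_sub_mul_inv_mul_eq _ _ _ _ hG.fromBlocks_topLeft.isUnit hG.fromBlocks_bottomRight.isUnit
      (by simpa only [Matrix.mul_assoc] using hS.isUnit)]
  simp only [Matrix.mul_assoc]
end

section
/- Let X be a real N×P matrix with full column rank and C a real N×L matrix such that Cᵀ(I_N − P_X)C is invertible. Let (Ω, F, ℙ) be a probability space and ε : Ω → ℝ^N a square-integrable random vector with E[ε_i] = 0 for all i and E[ε_i ε_j] = σ_y² if i = j and 0 otherwise. Then the random vector β̂_C − β_C := (Cᵀ(I_N − P_X)C)⁻¹Cᵀ(I_N − P_X)ε satisfies E[‖β̂_C − β_C‖₂²] = σ_y² · tr((Cᵀ(I_N − P_X)C)⁻¹). -/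
/-!
With `M = I - P_X`, `B = Cᵀ M C` and `A = B⁻¹ Cᵀ M`, expanding the square and using the
covariance `σ_y² I` of `ε` gives `E‖A ε‖² = σ_y² tr (A Aᵀ)`. Since `M` is symmetric and
idempotent, `A Aᵀ = B⁻¹ (Cᵀ M M C) B⁻¹ = B⁻¹ B B⁻¹ = B⁻¹`.
-/

open Matrix MeasureTheory ProbabilityTheory

namespace Matrix

variable {m n R : Type*} [Fintype m] [Fintype n] [DecidableEq n] [CommRing R]

theorem nonsing_inv_mul_self_mul_nonsing_inv (A : Matrix n n R) : A⁻¹ * A * A⁻¹ = A⁻¹ := by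
  by_cases hA : IsUnit A.det
  · rw [nonsing_inv_mul A hA, Matrix.one_mul]
  · rw [nonsing_inv_apply_not_isUnit A hA, Matrix.mul_zero]

theorem inv_mul_transpose_mul_mul_transpose_self {M : Matrix m m R} (hMs : M.IsSymm)
    (hMi : IsIdempotentElem M) (C : Matrix m n R) :
    ((Cᵀ * M * C)⁻¹ * Cᵀ * M) * ((Cᵀ * M * C)⁻¹ * Cᵀ * M)ᵀ = (Cᵀ * M * C)⁻¹ := by
  set B := Cᵀ * M * C
  have hBs : Bᵀ = B := by
    simp only [B, transpose_mul, transpose_transpose, hMs.eq, Matrix.mul_assoc]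
  calc (B⁻¹ * Cᵀ * M) * (B⁻¹ * Cᵀ * M)ᵀ = B⁻¹ * (Cᵀ * (M * M) * C) * B⁻¹ := by
        simp only [transpose_mul, transpose_nonsing_inv, hBs, hMs.eq, transpose_transpose,
          Matrix.mul_assoc]
    _ = B⁻¹ := by rw [hMi.eq, nonsing_inv_mul_self_mul_nonsing_inv]

end Matrix

theorem proj_isSymm {N K : ℕ} (X : Matrix (Fin N) (Fin K) ℝ) : (proj X).IsSymm := by
  simp [proj, IsSymm, transpose_mul, transpose_nonsing_inv, Matrix.mul_assoc]

theorem proj_isIdempotentElem {N K : ℕ} (X : Matrix (Fin N) (Fin K) ℝ) :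
    IsIdempotentElem (proj X) := by
  calc proj X * proj X = X * ((Xᵀ * X)⁻¹ * (Xᵀ * X) * (Xᵀ * X)⁻¹) * Xᵀ := by
        simp only [proj, Matrix.mul_assoc]
    _ = proj X := by rw [nonsing_inv_mul_self_mul_nonsing_inv, proj, Matrix.mul_assoc]

section SecondMoment

variable {Ω ι κ : Type*} [MeasurableSpace Ω] {μ : Measure Ω} [Fintype ι] [Fintype κ]
  {ε : Ω → ι → ℝ} {σ : ℝ}

theorem memLp_dotProduct (hL2 : ∀ i, MemLp (fun ω => ε ω i) 2 μ) (v : ι → ℝ) :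
    MemLp (fun ω => v ⬝ᵥ ε ω) 2 μ := by
  simpa only [dotProduct] using memLp_finsetSum _ fun i _ => (hL2 i).const_mul (v i)

theorem integral_dotProduct_sq [DecidableEq ι] (hL2 : ∀ i, MemLp (fun ω => ε ω i) 2 μ)
    (hcov : ∀ i j, ∫ ω, ε ω i * ε ω j ∂μ = if i = j then σ ^ 2 else 0) (v : ι → ℝ) :
    ∫ ω, (v ⬝ᵥ ε ω) ^ 2 ∂μ = σ ^ 2 * (v ⬝ᵥ v) := by
  have hint : ∀ i k, Integrable (fun ω => ε ω i * ε ω k) μ := fun i k =>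
    (hL2 i).integrable_mul (hL2 k)
  calc ∫ ω, (v ⬝ᵥ ε ω) ^ 2 ∂μ = ∫ ω, ∑ i, ∑ k, v i * v k * (ε ω i * ε ω k) ∂μ := by
        congr 1 with ω
        simp only [dotProduct, sq, Finset.sum_mul_sum]
        exact Finset.sum_congr rfl fun i _ => Finset.sum_congr rfl fun k _ => by ring
    _ = ∑ i, ∑ k, v i * v k * ∫ ω, ε ω i * ε ω k ∂μ := by
        rw [integral_finsetSum _ fun i _ =>
          integrable_finsetSum _ fun k _ => (hint i k).const_mul _]
        refine Finset.sum_congr rfl fun i _ => ?_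
        rw [integral_finsetSum _ fun k _ => (hint i k).const_mul _]
        simp only [integral_const_mul]
    _ = σ ^ 2 * (v ⬝ᵥ v) := by
        simp [hcov, dotProduct, Finset.mul_sum, mul_comm]

theorem integral_sum_mulVec_sq [DecidableEq ι] (hL2 : ∀ i, MemLp (fun ω => ε ω i) 2 μ)
    (hcov : ∀ i j, ∫ ω, ε ω i * ε ω j ∂μ = if i = j then σ ^ 2 else 0) (A : Matrix κ ι ℝ) :
    ∫ ω, ∑ j, (A *ᵥ ε ω) j ^ 2 ∂μ = σ ^ 2 * (A * Aᵀ).trace := by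
  simp only [mulVec]
  rw [integral_finsetSum _ fun j _ => (memLp_dotProduct hL2 (A j)).integrable_sq]
  simp only [integral_dotProduct_sq hL2 hcov, ← Finset.mul_sum]
  simp [trace, mul_apply, dotProduct]

end SecondMoment

theorem expected_sq_norm_ols_error_general
    {Ω : Type*} [MeasureSpace Ω]
    (N P L : ℕ) (X : Matrix (Fin N) (Fin P) ℝ) (C : Matrix (Fin N) (Fin L) ℝ)
    (ε : Ω → Fin N → ℝ) (σy : ℝ)
    (hL2 : ∀ i, MemLp (fun ω => ε ω i) 2)
    (hcov : ∀ i j, ∫ ω, ε ω i * ε ω j = if i = j then σy ^ 2 else 0) :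
    ∫ ω, ∑ j, (((Cᵀ * ((1 : Matrix (Fin N) (Fin N) ℝ) - proj X) * C)⁻¹ * Cᵀ *
        ((1 : Matrix (Fin N) (Fin N) ℝ) - proj X)).mulVec (ε ω) j) ^ 2
      = σy ^ 2 * ((Cᵀ * ((1 : Matrix (Fin N) (Fin N) ℝ) - proj X) * C)⁻¹).trace := by
  have hMs : (1 - proj X).IsSymm := by
    simp only [IsSymm, transpose_sub, transpose_one, (proj_isSymm X).eq]
  rw [integral_sum_mulVec_sq hL2 hcov,
    inv_mul_transpose_mul_mul_transpose_self hMs (proj_isIdempotentElem X).one_sub]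

/-- If `ε` is a square-integrable random vector with mean zero and covariance `σ_y² I`,
then `β̂_C - β_C = (Cᵀ(I - P_X)C)⁻¹Cᵀ(I - P_X)ε` satisfies
`E[‖β̂_C - β_C‖₂²] = σ_y² tr((Cᵀ(I - P_X)C)⁻¹)`. -/
theorem expected_sq_norm_ols_error
    {Ω : Type*} [MeasureSpace Ω] (hprob : IsProbabilityMeasure (ℙ : Measure Ω))
    (N P L : ℕ) (X : Matrix (Fin N) (Fin P) ℝ) (C : Matrix (Fin N) (Fin L) ℝ)
    (hX : X.rank = P)
    (hC : IsUnit (Cᵀ * ((1 : Matrix (Fin N) (Fin N) ℝ) - proj X) * C))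
    (ε : Ω → Fin N → ℝ) (σy : ℝ)
    (hmeas : ∀ i, Measurable fun ω => ε ω i)
    (hL2 : ∀ i, MemLp (fun ω => ε ω i) 2)
    (hmean : ∀ i, ∫ ω, ε ω i = 0)
    (hcov : ∀ i j, ∫ ω, ε ω i * ε ω j = if i = j then σy ^ 2 else 0) :
    ∫ ω, ∑ j, (((Cᵀ * ((1 : Matrix (Fin N) (Fin N) ℝ) - proj X) * C)⁻¹ * Cᵀ *
        ((1 : Matrix (Fin N) (Fin N) ℝ) - proj X)).mulVec (ε ω) j) ^ 2
      = σy ^ 2 * ((Cᵀ * ((1 : Matrix (Fin N) (Fin N) ℝ) - proj X) * C)⁻¹).trace :=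
  expected_sq_norm_ols_error_general N P L X C ε σy hL2 hcov
end

section
/- Let X be a real N×P matrix with full column rank, V a real N×L matrix, a_N > 0 and l_N > 0 with σ_min((I_N − P_X)V) ≥ l_N, and set C = a_N·V. Let (Ω, F, ℙ) be a probability space and ε : Ω → ℝ^N a square-integrable random vector with E[ε_i] = 0 for all i and E[ε_i ε_j] = σ_y² if i = j and 0 otherwise. Then the random vector β̂_C − β_C := (Cᵀ(I_N − P_X)C)⁻¹Cᵀ(I_N − P_X)ε satisfies E[‖β̂_C − β_C‖₂²] ≤ σ_y²·L/(a_N²·l_N²). -/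
/-!
With `Q = I - P_X` symmetric and idempotent and `B = Cᵀ Q C`, the error is `A ε` for
`A = B⁻¹ Cᵀ Q`, so white noise gives `E ‖A ε‖² = σ² tr (A Aᵀ) = σ² tr B⁻¹`. The singular-value
bound gives `vᵀ B v = a² ‖Q V v‖² ≥ a² l² ‖v‖²`, and then each diagonal entry of `B⁻¹` is at most
`1 / (a² l²)`: for `w = B⁻¹ eⱼ` we have `a² l² wⱼ² ≤ a² l² ‖w‖² ≤ wᵀ B w = wⱼ`.
-/

open Matrix MeasureTheory ProbabilityTheory

section Projection

variable {N K : ℕ} (M : Matrix (Fin N) (Fin K) ℝ)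

lemma isSymm_proj : (proj M).IsSymm := by
  simp only [IsSymm, proj, transpose_mul, transpose_transpose, transpose_nonsing_inv,
    Matrix.mul_assoc]

lemma isIdempotentElem_proj_s8 : IsIdempotentElem (proj M) := by
  -- without full column rank, `(Mᵀ M)⁻¹ = 0` and hence `proj M = 0`
  by_cases h : IsUnit (Mᵀ * M).det
  · calc proj M * proj M = M * ((Mᵀ * M)⁻¹ * (Mᵀ * M) * (Mᵀ * M)⁻¹) * Mᵀ := by
          simp only [proj, Matrix.mul_assoc]
      _ = proj M := by rw [nonsing_inv_mul _ h, Matrix.one_mul, proj]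
  · simp [IsIdempotentElem, proj, nonsing_inv_apply_not_isUnit _ h]

end Projection

section Residualized

variable {n l : Type*} [Fintype n] {Q : Matrix n n ℝ}

lemma transpose_mul_mul_eq_of_isSymm_of_isIdempotentElem (hQs : Q.IsSymm)
    (hQi : IsIdempotentElem Q) (C : Matrix n l ℝ) :
    Cᵀ * Q * C = (Q * C)ᵀ * (Q * C) := by
  rw [transpose_mul, hQs.eq, ← Matrix.mul_assoc, Matrix.mul_assoc Cᵀ Q Q, hQi.eq]

lemma dotProduct_transpose_mul_self_mulVec [Fintype l] (A : Matrix n l ℝ) (v : l → ℝ) :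
    v ⬝ᵥ (Aᵀ * A) *ᵥ v = A *ᵥ v ⬝ᵥ A *ᵥ v := by
  rw [← mulVec_mulVec, dotProduct_transpose_mulVec, dotProduct_comm]

variable [Fintype l] [DecidableEq l]

/-- With `Q = I - P_X`, the estimation error is `β̂_C - β_C = olsMatrix C Q *ᵥ ε`. -/
noncomputable def olsMatrix (C : Matrix n l ℝ) (Q : Matrix n n ℝ) : Matrix l n ℝ :=
  (Cᵀ * Q * C)⁻¹ * Cᵀ * Q

lemma olsMatrix_mul_transpose (hQs : Q.IsSymm) (hQi : IsIdempotentElem Q) {C : Matrix n l ℝ}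
    (hC : IsUnit (Cᵀ * Q * C).det) :
    olsMatrix C Q * (olsMatrix C Q)ᵀ = (Cᵀ * Q * C)⁻¹ := by
  calc olsMatrix C Q * (olsMatrix C Q)ᵀ
      = (Cᵀ * Q * C)⁻¹ * (Cᵀ * (Q * Q) * C) * (Cᵀ * Q * C)⁻¹ := by
        simp only [olsMatrix, transpose_mul, transpose_nonsing_inv, hQs.eq,
          transpose_transpose, Matrix.mul_assoc]
    _ = (Cᵀ * Q * C)⁻¹ := by
        rw [hQi.eq, nonsing_inv_mul _ hC, Matrix.one_mul]

end Residualized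

section Trace

variable {n : Type*} [Fintype n] {B : Matrix n n ℝ} {c : ℝ}

lemma posDef_of_le_dotProduct_mulVec (hB : B.IsSymm) (hc : 0 < c)
    (h : ∀ v, c * (v ⬝ᵥ v) ≤ v ⬝ᵥ B *ᵥ v) : B.PosDef := by
  refine .of_dotProduct_mulVec_pos (isHermitian_iff_isSymm.mpr hB) fun v hv => ?_
  have hv' : 0 < v ⬝ᵥ v := by simpa using dotProduct_star_self_pos_iff.mpr hv
  simpa using (mul_pos hc hv').trans_le (h v)

variable [DecidableEq n]

lemma inv_apply_self_le_of_le_dotProduct_mulVec (hB : IsUnit B.det) (hc : 0 < c)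
    (h : ∀ v, c * (v ⬝ᵥ v) ≤ v ⬝ᵥ B *ᵥ v) (j : n) : B⁻¹ j j ≤ 1 / c := by
  set w := B⁻¹ *ᵥ Pi.single j 1
  have hwj : w j = B⁻¹ j j := by simp [w, mulVec_single]
  have hBw : B *ᵥ w = Pi.single j 1 := by
    rw [mulVec_mulVec, mul_nonsing_inv _ hB, one_mulVec]
  have hform : c * (w ⬝ᵥ w) ≤ w j := by
    simpa [hBw, dotProduct_single] using h w
  have hcoord : w j ^ 2 ≤ w ⬝ᵥ w := by
    simpa [dotProduct, sq] using
      Finset.single_le_sum (fun i _ => mul_self_nonneg (w i)) (Finset.mem_univ j)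
  rw [← hwj, le_div_iff₀ hc]
  nlinarith [mul_le_mul_of_nonneg_left hcoord hc.le]

lemma trace_inv_le_of_le_dotProduct_mulVec (hB : IsUnit B.det) (hc : 0 < c)
    (h : ∀ v, c * (v ⬝ᵥ v) ≤ v ⬝ᵥ B *ᵥ v) : trace B⁻¹ ≤ Fintype.card n / c := by
  calc trace B⁻¹ ≤ ∑ _j : n, 1 / c :=
        Finset.sum_le_sum fun j _ => inv_apply_self_le_of_le_dotProduct_mulVec hB hc h j
    _ = Fintype.card n / c := by simp [div_eq_mul_inv]

end Trace

lemma sum_sq_eq_dotProduct_self {n : Type*} [Fintype n] (v : n → ℝ) :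
    ∑ i, v i ^ 2 = v ⬝ᵥ v := by
  simp [dotProduct, sq]

lemma sq_mul_le_dotProduct_mulVec_of_le_sqrt {m n : Type*} [Fintype m] [Fintype n]
    {A : Matrix m n ℝ} {c : ℝ} (hc : 0 ≤ c)
    (h : ∀ v : n → ℝ, ∑ i, v i ^ 2 = 1 → c ≤ √(∑ i, (A *ᵥ v) i ^ 2)) (v : n → ℝ) :
    c ^ 2 * (v ⬝ᵥ v) ≤ A *ᵥ v ⬝ᵥ A *ᵥ v := by
  simp only [sum_sq_eq_dotProduct_self] at h
  obtain rfl | hv := eq_or_ne v 0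
  · simp
  have hpos : 0 < v ⬝ᵥ v := by simpa using dotProduct_star_self_pos_iff.mpr hv
  set s := √(v ⬝ᵥ v)
  have hs : 0 < s := Real.sqrt_pos.mpr hpos
  have hss : s ^ 2 = v ⬝ᵥ v := Real.sq_sqrt hpos.le
  have hunit : s⁻¹ • v ⬝ᵥ s⁻¹ • v = 1 := by
    simp only [smul_dotProduct, dotProduct_smul, smul_eq_mul, ← hss]
    field_simp
  have hu : c ^ 2 ≤ A *ᵥ (s⁻¹ • v) ⬝ᵥ A *ᵥ (s⁻¹ • v) :=
    (Real.le_sqrt hc (Finset.sum_nonneg fun i _ => mul_self_nonneg _)).mp (h _ hunit)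
  rw [mulVec_smul, smul_dotProduct, dotProduct_smul, smul_eq_mul, smul_eq_mul] at hu
  calc c ^ 2 * (v ⬝ᵥ v) ≤ s⁻¹ * (s⁻¹ * (A *ᵥ v ⬝ᵥ A *ᵥ v)) * s ^ 2 := by
        rw [← hss]; gcongr
    _ = A *ᵥ v ⬝ᵥ A *ᵥ v := by field_simp

section WhiteNoise

variable {Ω m n : Type*} [MeasurableSpace Ω] [Fintype m] [Fintype n] [DecidableEq n]
  {μ : Measure Ω} {ε : Ω → n → ℝ} {σ : ℝ}

lemma integral_sum_sq_mulVec (hL2 : ∀ i, MemLp (fun ω => ε ω i) 2 μ)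
    (hcov : ∀ i j, ∫ ω, ε ω i * ε ω j ∂μ = if i = j then σ ^ 2 else 0) (A : Matrix m n ℝ) :
    ∫ ω, ∑ j, (A *ᵥ ε ω) j ^ 2 ∂μ = σ ^ 2 * trace (A * Aᵀ) := by
  have hint : ∀ i k, Integrable (fun ω => ε ω i * ε ω k) μ :=
    fun i k => (hL2 i).integrable_mul (hL2 k)
  have hexpand : ∀ ω, ∑ j, (A *ᵥ ε ω) j ^ 2 = ∑ i, ∑ k, (Aᵀ * A) i k * (ε ω i * ε ω k) := by
    intro ω
    rw [sum_sq_eq_dotProduct_self, ← dotProduct_transpose_mul_self_mulVec]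
    simp only [dotProduct, mulVec, Finset.mul_sum]
    exact Finset.sum_congr rfl fun i _ => Finset.sum_congr rfl fun k _ => by ring
  calc ∫ ω, ∑ j, (A *ᵥ ε ω) j ^ 2 ∂μ
      = ∑ i, ∑ k, (Aᵀ * A) i k * ∫ ω, ε ω i * ε ω k ∂μ := by
        simp_rw [hexpand]
        rw [integral_finsetSum (f := fun i ω => ∑ k, (Aᵀ * A) i k * (ε ω i * ε ω k)) _
          fun i _ => integrable_finsetSum _ fun k _ => (hint i k).const_mul _]
        refine Finset.sum_congr rfl fun i _ => ?_
        rw [integral_finsetSum _ fun k _ => (hint i k).const_mul _]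
        exact Finset.sum_congr rfl fun k _ => integral_const_mul _ _
    _ = σ ^ 2 * trace (Aᵀ * A) := by
        simp [hcov, trace, Finset.mul_sum, mul_comm]
    _ = σ ^ 2 * trace (A * Aᵀ) := by rw [trace_mul_comm]

end WhiteNoise

theorem expected_sq_norm_ols_error_le_general
    {Ω : Type*} [MeasureSpace Ω]
    (N P L : ℕ) (X : Matrix (Fin N) (Fin P) ℝ) (V : Matrix (Fin N) (Fin L) ℝ)
    (aN lN : ℝ) (haN : 0 < aN) (hlN : 0 < lN)
    (hσ : ∀ v : Fin L → ℝ, ∑ i, v i ^ 2 = 1 →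
      lN ≤ Real.sqrt (∑ i, (((1 : Matrix (Fin N) (Fin N) ℝ) - proj X) * V).mulVec v i ^ 2))
    (ε : Ω → Fin N → ℝ) (σy : ℝ)
    (hL2 : ∀ i, MemLp (fun ω => ε ω i) 2)
    (hcov : ∀ i j, ∫ ω, ε ω i * ε ω j = if i = j then σy ^ 2 else 0) :
    ∫ ω, ∑ j, ((((aN • V)ᵀ * ((1 : Matrix (Fin N) (Fin N) ℝ) - proj X) * (aN • V))⁻¹ *
        (aN • V)ᵀ * ((1 : Matrix (Fin N) (Fin N) ℝ) - proj X)).mulVec (ε ω) j) ^ 2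
      ≤ σy ^ 2 * L / (aN ^ 2 * lN ^ 2) := by
  set Q := (1 : Matrix (Fin N) (Fin N) ℝ) - proj X
  have hQs : Q.IsSymm := isSymm_one.sub (isSymm_proj X)
  have hQi : IsIdempotentElem Q := (isIdempotentElem_proj_s8 X).one_sub
  set B := (aN • V)ᵀ * Q * (aN • V) with hB_def
  have hBs : B.IsSymm := by simp [B, IsSymm, transpose_mul, hQs.eq, Matrix.mul_assoc]
  have hc : 0 < aN ^ 2 * lN ^ 2 := by positivity
  have hform : ∀ v, aN ^ 2 * lN ^ 2 * (v ⬝ᵥ v) ≤ v ⬝ᵥ B *ᵥ v := fun v => calc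
    aN ^ 2 * lN ^ 2 * (v ⬝ᵥ v) ≤ aN ^ 2 * ((Q * V) *ᵥ v ⬝ᵥ (Q * V) *ᵥ v) := by
      rw [mul_assoc]
      gcongr
      exact sq_mul_le_dotProduct_mulVec_of_le_sqrt hlN.le hσ v
    _ = v ⬝ᵥ B *ᵥ v := by
      rw [hB_def, transpose_mul_mul_eq_of_isSymm_of_isIdempotentElem hQs hQi,
        dotProduct_transpose_mul_self_mulVec, Matrix.mul_smul, smul_mulVec, smul_dotProduct,
        dotProduct_smul, smul_eq_mul, smul_eq_mul]
      ring
  have hB : IsUnit B.det :=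
    (isUnit_iff_isUnit_det B).mp (posDef_of_le_dotProduct_mulVec hBs hc hform).isUnit
  change ∫ ω, ∑ j, (olsMatrix (aN • V) Q *ᵥ ε ω) j ^ 2 ≤ _
  rw [integral_sum_sq_mulVec hL2 hcov, olsMatrix_mul_transpose hQs hQi hB, mul_div_assoc]
  gcongr
  simpa only [Fintype.card_fin] using trace_inv_le_of_le_dotProduct_mulVec hB hc hform

/-- With `C = a_N • V`, `σ_min((I - P_X)V) ≥ l_N > 0`, and `ε` a mean-zero
square-integrable random vector with covariance `σ_y² I`, the random vector
`β̂_C - β_C = (Cᵀ(I - P_X)C)⁻¹Cᵀ(I - P_X)ε` satisfies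
`E[‖β̂_C - β_C‖₂²] ≤ σ_y² L / (a_N² l_N²)`. -/
theorem expected_sq_norm_ols_error_le
    {Ω : Type*} [MeasureSpace Ω] (hprob : IsProbabilityMeasure (ℙ : Measure Ω))
    (N P L : ℕ) (X : Matrix (Fin N) (Fin P) ℝ) (V : Matrix (Fin N) (Fin L) ℝ)
    (aN lN : ℝ) (haN : 0 < aN) (hlN : 0 < lN)
    (hX : X.rank = P)
    (hσ : ∀ v : Fin L → ℝ, ∑ i, v i ^ 2 = 1 →
      lN ≤ Real.sqrt (∑ i, (((1 : Matrix (Fin N) (Fin N) ℝ) - proj X) * V).mulVec v i ^ 2))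
    (ε : Ω → Fin N → ℝ) (σy : ℝ)
    (hmeas : ∀ i, Measurable fun ω => ε ω i)
    (hL2 : ∀ i, MemLp (fun ω => ε ω i) 2)
    (hmean : ∀ i, ∫ ω, ε ω i = 0)
    (hcov : ∀ i j, ∫ ω, ε ω i * ε ω j = if i = j then σy ^ 2 else 0) :
    ∫ ω, ∑ j, ((((aN • V)ᵀ * ((1 : Matrix (Fin N) (Fin N) ℝ) - proj X) * (aN • V))⁻¹ *
        (aN • V)ᵀ * ((1 : Matrix (Fin N) (Fin N) ℝ) - proj X)).mulVec (ε ω) j) ^ 2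
      ≤ σy ^ 2 * L / (aN ^ 2 * lN ^ 2) :=
  expected_sq_norm_ols_error_le_general N P L X V aN lN haN hlN hσ ε σy hL2 hcov
end

section
/- Let P be a real symmetric idempotent N×N matrix with tr(P) = L. Let (Ω, F, ℙ) be a probability space and x, y : Ω → ℝ^N random vectors such that the N pairs (x_k, y_k), k = 1,…,N, are mutually independent, E[x_k] = 0 and E[y_k] = 0 for all k, and there are finite constants m_x, m_y with E[x_k²] = m_x and E[y_k²] = m_y for all k. Then E[|xᵀPy|] ≤ L·√(m_x·m_y). -/
/-!
Since `P` is a symmetric projection, `xᵀ P y = (P x) ⬝ (P y)` and `(P x) ⬝ (P x) = xᵀ P x`.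
Cauchy–Schwarz, first pointwise in `ℝ^N` and then in `L²(ℙ)`, gives
`E |xᵀ P y| ≤ √(E[xᵀ P x]) √(E[yᵀ P y])`. Independence and centring make the coordinates
uncorrelated, so `E[zᵀ P z] = tr(P) E[z_k²]`, which is `L m_x`, resp. `L m_y`.
-/

open Matrix MeasureTheory ProbabilityTheory

namespace Matrix

variable {n R : Type*} [Fintype n]

lemma dotProduct_mulVec_eq_mulVec_dotProduct_mulVec [CommSemiring R] {P : Matrix n n R}
    (hsym : Pᵀ = P) (hidem : IsIdempotentElem P) (x y : n → R) :
    x ⬝ᵥ P *ᵥ y = P *ᵥ x ⬝ᵥ P *ᵥ y := by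
  conv_lhs => rw [← hidem.eq, ← mulVec_mulVec, dotProduct_mulVec, ← hsym, vecMul_transpose, hsym]

lemma dotProduct_mulVec_eq_sum_sum [CommSemiring R] (A : Matrix n n R) (u v : n → R) :
    u ⬝ᵥ A *ᵥ v = ∑ j, ∑ k, A j k * (u j * v k) := by
  simp only [dotProduct, mulVec, Finset.mul_sum]
  exact Finset.sum_congr rfl fun j _ => Finset.sum_congr rfl fun k _ => by ring

lemma sq_dotProduct_le [CommRing R] [LinearOrder R] [IsStrictOrderedRing R] (u v : n → R) :
    (u ⬝ᵥ v) ^ 2 ≤ (u ⬝ᵥ u) * (v ⬝ᵥ v) := by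
  simpa only [dotProduct, sq] using Finset.sum_mul_sq_le_sq_mul_sq Finset.univ u v

lemma dotProduct_self_nonneg [CommRing R] [LinearOrder R] [IsStrictOrderedRing R] (u : n → R) :
    0 ≤ u ⬝ᵥ u :=
  Finset.sum_nonneg fun i _ => mul_self_nonneg (u i)

lemma abs_dotProduct_le_sqrt_mul_sqrt (u v : n → ℝ) :
    |u ⬝ᵥ v| ≤ √(u ⬝ᵥ u) * √(v ⬝ᵥ v) := by
  rw [← Real.sqrt_mul (dotProduct_self_nonneg u), ← Real.sqrt_sq_eq_abs]
  exact Real.sqrt_le_sqrt (sq_dotProduct_le u v)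

lemma dotProduct_mulVec_self_nonneg_of_idempotent {P : Matrix n n ℝ} (hsym : Pᵀ = P)
    (hidem : IsIdempotentElem P) (x : n → ℝ) : 0 ≤ x ⬝ᵥ P *ᵥ x := by
  rw [dotProduct_mulVec_eq_mulVec_dotProduct_mulVec hsym hidem]
  exact dotProduct_self_nonneg _

lemma abs_dotProduct_mulVec_le_of_idempotent {P : Matrix n n ℝ} (hsym : Pᵀ = P)
    (hidem : IsIdempotentElem P) (x y : n → ℝ) :
    |x ⬝ᵥ P *ᵥ y| ≤ √(x ⬝ᵥ P *ᵥ x) * √(y ⬝ᵥ P *ᵥ y) := by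
  rw [dotProduct_mulVec_eq_mulVec_dotProduct_mulVec hsym hidem x y,
    dotProduct_mulVec_eq_mulVec_dotProduct_mulVec hsym hidem x x,
    dotProduct_mulVec_eq_mulVec_dotProduct_mulVec hsym hidem y y]
  exact abs_dotProduct_le_sqrt_mul_sqrt _ _

end Matrix

section CauchySchwarz

variable {α : Type*} [MeasurableSpace α] {μ : Measure α} {f g : α → ℝ}

lemma memLp_two_sqrt (hf0 : 0 ≤ᵐ[μ] f) (hf : Integrable f μ) :
    MemLp (fun a => √(f a)) 2 μ := by
  refine (memLp_two_iff_integrable_sq hf.aemeasurable.sqrt.aestronglyMeasurable).2 (hf.congr ?_)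
  filter_upwards [hf0] with a ha using (Real.sq_sqrt ha).symm

lemma integrable_sqrt_mul_sqrt (hf0 : 0 ≤ᵐ[μ] f) (hg0 : 0 ≤ᵐ[μ] g) (hf : Integrable f μ)
    (hg : Integrable g μ) : Integrable (fun a => √(f a) * √(g a)) μ :=
  (memLp_two_sqrt hf0 hf).integrable_mul (memLp_two_sqrt hg0 hg)

lemma integral_sqrt_mul_sqrt_le (hf0 : 0 ≤ᵐ[μ] f) (hg0 : 0 ≤ᵐ[μ] g) (hf : Integrable f μ)
    (hg : Integrable g μ) :
    ∫ a, √(f a) * √(g a) ∂μ ≤ √(∫ a, f a ∂μ) * √(∫ a, g a ∂μ) := by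
  have hnorm : ∀ {h : α → ℝ}, 0 ≤ᵐ[μ] h →
      (∫ a, √(h a) ^ (2 : ℝ) ∂μ) ^ (1 / (2 : ℝ)) = √(∫ a, h a ∂μ) := by
    intro h hh0
    rw [← Real.sqrt_eq_rpow]
    congr 1
    refine integral_congr_ae ?_
    filter_upwards [hh0] with a ha
    rw [Real.rpow_two, Real.sq_sqrt ha]
  have holder := integral_mul_le_Lp_mul_Lq_of_nonneg Real.HolderConjugate.two_two
    (ae_of_all _ fun a => Real.sqrt_nonneg (f a)) (ae_of_all _ fun a => Real.sqrt_nonneg (g a))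
    (by simpa using memLp_two_sqrt hf0 hf) (by simpa using memLp_two_sqrt hg0 hg)
  rwa [hnorm hf0, hnorm hg0] at holder

end CauchySchwarz

section QuadraticForms

variable {Ω ι : Type*} [MeasurableSpace Ω] {μ : Measure Ω} {z : Ω → ι → ℝ}

lemma integral_mul_eq_ite_of_indepFun [DecidableEq ι]
    (hmeas : ∀ k, AEStronglyMeasurable (fun ω => z ω k) μ)
    (hindep : Pairwise fun j k => IndepFun (fun ω => z ω j) (fun ω => z ω k) μ)
    (hmean : ∀ k, ∫ ω, z ω k ∂μ = 0) {m : ℝ} (hsq : ∀ k, ∫ ω, z ω k ^ 2 ∂μ = m) (j k : ι) :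
    ∫ ω, z ω j * z ω k ∂μ = if j = k then m else 0 := by
  split_ifs with hjk
  · simp only [hjk, ← sq, hsq]
  · rw [(hindep hjk).integral_fun_mul_eq_mul_integral (hmeas j) (hmeas k), hmean j, zero_mul]

variable [Fintype ι]

lemma integrable_dotProduct_mulVec_self (A : Matrix ι ι ℝ)
    (hz : ∀ k, MemLp (fun ω => z ω k) 2 μ) : Integrable (fun ω => z ω ⬝ᵥ A *ᵥ z ω) μ := by
  simp only [dotProduct_mulVec_eq_sum_sum]
  exact integrable_finsetSum _ fun j _ => integrable_finsetSum _ fun k _ =>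
    ((hz j).integrable_mul (hz k)).const_mul _

lemma integral_dotProduct_mulVec_self [DecidableEq ι] (A : Matrix ι ι ℝ)
    (hz : ∀ k, MemLp (fun ω => z ω k) 2 μ) {m : ℝ}
    (hcov : ∀ j k, ∫ ω, z ω j * z ω k ∂μ = if j = k then m else 0) :
    ∫ ω, z ω ⬝ᵥ A *ᵥ z ω ∂μ = A.trace * m := by
  have hint : ∀ j k, Integrable (fun ω => A j k * (z ω j * z ω k)) μ := fun j k =>
    ((hz j).integrable_mul (hz k)).const_mul _
  simp only [dotProduct_mulVec_eq_sum_sum]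
  rw [integral_finsetSum _ fun j _ => integrable_finsetSum _ fun k _ => hint j k]
  simp only [integral_finsetSum _ fun k _ => hint _ k, integral_const_mul, hcov, mul_ite,
    mul_zero, Finset.sum_ite_eq, Finset.mem_univ, if_true, trace, diag, Finset.sum_mul]

lemma integral_abs_dotProduct_mulVec_le_of_idempotent {P : Matrix ι ι ℝ} (hsym : Pᵀ = P)
    (hidem : IsIdempotentElem P) {x y : Ω → ι → ℝ} (hx : ∀ k, MemLp (fun ω => x ω k) 2 μ)
    (hy : ∀ k, MemLp (fun ω => y ω k) 2 μ) :
    ∫ ω, |x ω ⬝ᵥ P *ᵥ y ω| ∂μ ≤ √(∫ ω, x ω ⬝ᵥ P *ᵥ x ω ∂μ) * √(∫ ω, y ω ⬝ᵥ P *ᵥ y ω ∂μ) := by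
  have hQx := ae_of_all μ fun ω => dotProduct_mulVec_self_nonneg_of_idempotent hsym hidem (x ω)
  have hQy := ae_of_all μ fun ω => dotProduct_mulVec_self_nonneg_of_idempotent hsym hidem (y ω)
  have hIx := integrable_dotProduct_mulVec_self P hx
  have hIy := integrable_dotProduct_mulVec_self P hy
  calc ∫ ω, |x ω ⬝ᵥ P *ᵥ y ω| ∂μ
      ≤ ∫ ω, √(x ω ⬝ᵥ P *ᵥ x ω) * √(y ω ⬝ᵥ P *ᵥ y ω) ∂μ :=
        integral_mono_of_nonneg (ae_of_all _ fun ω => abs_nonneg _)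
          (integrable_sqrt_mul_sqrt hQx hQy hIx hIy)
          (ae_of_all _ fun ω => abs_dotProduct_mulVec_le_of_idempotent hsym hidem (x ω) (y ω))
    _ ≤ _ := integral_sqrt_mul_sqrt_le hQx hQy hIx hIy

end QuadraticForms

theorem abs_expectation_quadratic_form_le_general
    {Ω : Type*} [MeasureSpace Ω]
    (N L : ℕ) (Pm : Matrix (Fin N) (Fin N) ℝ)
    (hsym : Pmᵀ = Pm) (hidem : Pm * Pm = Pm) (htr : Pm.trace = (L : ℝ))
    (x y : Ω → Fin N → ℝ)
    (hmeas : ∀ k, Measurable fun ω => (x ω k, y ω k))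
    (hindep : iIndepFun (fun k ω => (x ω k, y ω k)) ℙ)
    (hmx : ∀ k, ∫ ω, x ω k = 0) (hmy : ∀ k, ∫ ω, y ω k = 0)
    (mx my : ℝ)
    (hx2i : ∀ k, Integrable fun ω => (x ω k) ^ 2)
    (hx2 : ∀ k, ∫ ω, (x ω k) ^ 2 = mx)
    (hy2i : ∀ k, Integrable fun ω => (y ω k) ^ 2)
    (hy2 : ∀ k, ∫ ω, (y ω k) ^ 2 = my) :
    ∫ ω, |x ω ⬝ᵥ Pm.mulVec (y ω)| ≤ L * Real.sqrt (mx * my) := by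
  have hx : ∀ k, Measurable fun ω => x ω k := fun k => (hmeas k).fst
  have hy : ∀ k, Measurable fun ω => y ω k := fun k => (hmeas k).snd
  have hxL2 : ∀ k, MemLp (fun ω => x ω k) 2 :=
    fun k => (memLp_two_iff_integrable_sq (hx k).aestronglyMeasurable).2 (hx2i k)
  have hyL2 : ∀ k, MemLp (fun ω => y ω k) 2 :=
    fun k => (memLp_two_iff_integrable_sq (hy k).aestronglyMeasurable).2 (hy2i k)
  have hEx : ∫ ω, x ω ⬝ᵥ Pm *ᵥ x ω = L * mx := by
    rw [integral_dotProduct_mulVec_self Pm hxL2 (integral_mul_eq_ite_of_indepFun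
      (fun k => (hx k).aestronglyMeasurable)
      (fun j k hjk => (hindep.indepFun hjk).comp measurable_fst measurable_fst) hmx hx2), htr]
  have hEy : ∫ ω, y ω ⬝ᵥ Pm *ᵥ y ω = L * my := by
    rw [integral_dotProduct_mulVec_self Pm hyL2 (integral_mul_eq_ite_of_indepFun
      (fun k => (hy k).aestronglyMeasurable)
      (fun j k hjk => (hindep.indepFun hjk).comp measurable_snd measurable_snd) hmy hy2), htr]
  have hLmx : 0 ≤ (L : ℝ) * mx := hEx ▸ integral_nonneg fun ω =>
    dotProduct_mulVec_self_nonneg_of_idempotent hsym hidem (x ω)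
  calc ∫ ω, |x ω ⬝ᵥ Pm *ᵥ y ω|
      ≤ √(∫ ω, x ω ⬝ᵥ Pm *ᵥ x ω) * √(∫ ω, y ω ⬝ᵥ Pm *ᵥ y ω) :=
        integral_abs_dotProduct_mulVec_le_of_idempotent hsym hidem hxL2 hyL2
    _ = L * √(mx * my) := by
        rw [hEx, hEy, ← Real.sqrt_mul hLmx, mul_mul_mul_comm, ← sq,
          Real.sqrt_mul (sq_nonneg _), Real.sqrt_sq L.cast_nonneg]

/-- Let `P` be a real symmetric idempotent `N × N` matrix with `tr(P) = L`. If the pairs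
`(x_k, y_k)` are mutually independent, mean zero, with `E[x_k²] = m_x` and `E[y_k²] = m_y`,
then `E[|xᵀ P y|] ≤ L √(m_x m_y)`. -/
theorem abs_expectation_quadratic_form_le
    {Ω : Type*} [MeasureSpace Ω] (hprob : IsProbabilityMeasure (ℙ : Measure Ω))
    (N L : ℕ) (Pm : Matrix (Fin N) (Fin N) ℝ)
    (hsym : Pmᵀ = Pm) (hidem : Pm * Pm = Pm) (htr : Pm.trace = (L : ℝ))
    (x y : Ω → Fin N → ℝ)
    (hmeas : ∀ k, Measurable fun ω => (x ω k, y ω k))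
    (hindep : iIndepFun (fun k ω => (x ω k, y ω k)) ℙ)
    (hmx : ∀ k, ∫ ω, x ω k = 0) (hmy : ∀ k, ∫ ω, y ω k = 0)
    (mx my : ℝ)
    (hx2i : ∀ k, Integrable fun ω => (x ω k) ^ 2)
    (hx2 : ∀ k, ∫ ω, (x ω k) ^ 2 = mx)
    (hy2i : ∀ k, Integrable fun ω => (y ω k) ^ 2)
    (hy2 : ∀ k, ∫ ω, (y ω k) ^ 2 = my) :
    ∫ ω, |x ω ⬝ᵥ Pm.mulVec (y ω)| ≤ L * Real.sqrt (mx * my) :=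
  abs_expectation_quadratic_form_le_general N L Pm hsym hidem htr x y hmeas hindep hmx hmy mx my
    hx2i hx2 hy2i hy2
end

section
/- Let C and Ĉ be real N×L matrices, g : {1,…,N} → {1,…,R} a community assignment such that N_r ≥ ε·N for every community r, where ε ∈ (0,1], and let Z and Ẑ be the community-based centrality vectors of C and Ĉ respectively (with the same assignment g). Then (1/N)·ẐᵀẐ ≥ (1/N)·ZᵀZ − (2·R²/(N·L·ε²))·‖C‖_F·‖Ĉ − C‖_F. -/
open Finset

/-- The size `N_r` of community `r` under the community assignment `g`. -/
def commSize {N R : ℕ} (g : Fin N → Fin R) (r : Fin R) : ℕ :=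
  (Finset.univ.filter fun i => g i = r).card

/-- The community-based centrality vector of an `N × L` matrix `C` with respect to the
community assignment `g`:
`Z_k = (1/(L N_{g k})) ∑_{i : g i = g k} ∑_l C i l`. -/
noncomputable def commCentrality {N L R : ℕ} (C : Matrix (Fin N) (Fin L) ℝ)
    (g : Fin N → Fin R) : Fin N → ℝ :=
  fun k => (1 / ((L : ℝ) * (commSize g (g k) : ℝ))) *
    ∑ i ∈ Finset.univ.filter fun i => g i = g k, ∑ l, C i l

/-- The Frobenius norm of a real matrix. -/
noncomputable def frobNorm {N L : ℕ} (C : Matrix (Fin N) (Fin L) ℝ) : ℝ :=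
  Real.sqrt (∑ i, ∑ l, (C i l) ^ 2)

/-!
Write `Ĉ = C + D`. Coordinatewise `Ẑ_k = Z_k + D_k`, so `Z_k² - Ẑ_k² ≤ -2 Z_k D_k`, and
Cauchy–Schwarz over the `L N_{g k}` entries averaged in `Z_k` gives
`Z_k² ≤ ‖C‖_F² / (L N_{g k})`, hence `|Z_k D_k| ≤ ‖C‖_F ‖D‖_F / (L N_{g k})`.
Summing over `k` with `N_{g k} ≥ ε N` gives
`ZᵀZ - ẐᵀẐ ≤ 2 ‖C‖_F ‖D‖_F / (L ε)`, and `1/ε ≤ R²/ε²` because `ε ≤ 1 ≤ R`.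
-/

theorem sq_sum_sum_le_card_mul_card_mul_sum_sum_sq {ι κ α : Type*} [Semiring α]
    [LinearOrder α] [IsStrictOrderedRing α] [ExistsAddOfLE α]
    (s : Finset ι) (t : Finset κ) (f : ι → κ → α) :
    (∑ i ∈ s, ∑ j ∈ t, f i j) ^ 2 ≤ (#s * #t) * ∑ i ∈ s, ∑ j ∈ t, f i j ^ 2 := by
  simpa only [sum_product, card_product, Nat.cast_mul] using
    sq_sum_le_card_mul_sum_sq (s := s ×ˢ t) (f := fun p => f p.1 p.2)

theorem frobNorm_nonneg {N L : ℕ} (C : Matrix (Fin N) (Fin L) ℝ) : 0 ≤ frobNorm C :=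
  Real.sqrt_nonneg _

theorem sq_frobNorm {N L : ℕ} (C : Matrix (Fin N) (Fin L) ℝ) :
    frobNorm C ^ 2 = ∑ i, ∑ l, C i l ^ 2 :=
  Real.sq_sqrt (by positivity)

section
variable {N L R : ℕ}

theorem commCentrality_add (C D : Matrix (Fin N) (Fin L) ℝ) (g : Fin N → Fin R) (k : Fin N) :
    commCentrality (C + D) g k = commCentrality C g k + commCentrality D g k := by
  simp only [commCentrality, Matrix.add_apply, sum_add_distrib, mul_add]

theorem sq_commCentrality_le (C : Matrix (Fin N) (Fin L) ℝ) (g : Fin N → Fin R) (k : Fin N) :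
    commCentrality C g k ^ 2 ≤ frobNorm C ^ 2 / (L * commSize g (g k)) := by
  set F := univ.filter fun i => g i = g k
  set m : ℝ := L * commSize g (g k)
  set S := ∑ i ∈ F, ∑ l, C i l
  have hS : S ^ 2 ≤ m * frobNorm C ^ 2 := by
    have hpart : ∑ i ∈ F, ∑ l, C i l ^ 2 ≤ frobNorm C ^ 2 := by
      rw [sq_frobNorm]
      exact sum_le_sum_of_subset_of_nonneg (subset_univ F) fun i _ _ => by positivity
    calc S ^ 2 ≤ (#F * #(univ : Finset (Fin L))) * ∑ i ∈ F, ∑ l, C i l ^ 2 :=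
          sq_sum_sum_le_card_mul_card_mul_sum_sum_sq F univ C
      _ = m * ∑ i ∈ F, ∑ l, C i l ^ 2 := by
          rw [card_univ, Fintype.card_fin, mul_comm (#F : ℝ)]; rfl
      _ ≤ m * frobNorm C ^ 2 := mul_le_mul_of_nonneg_left hpart (by positivity)
  change (1 / m * S) ^ 2 ≤ frobNorm C ^ 2 / m
  rcases (show 0 ≤ m by positivity).eq_or_lt with hm | hm
  · simp [← hm]
  · calc (1 / m * S) ^ 2 = S ^ 2 / m ^ 2 := by ring
      _ ≤ m * frobNorm C ^ 2 / m ^ 2 := div_le_div_of_nonneg_right hS (by positivity)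
      _ = frobNorm C ^ 2 / m := by field_simp

theorem abs_commCentrality_mul_le (C D : Matrix (Fin N) (Fin L) ℝ) (g : Fin N → Fin R)
    (k : Fin N) :
    |commCentrality C g k * commCentrality D g k| ≤
      frobNorm C * frobNorm D / (L * commSize g (g k)) := by
  set m : ℝ := L * commSize g (g k)
  have hm : 0 ≤ m := by positivity
  refine abs_le_of_sq_le_sq ?_ (div_nonneg (mul_nonneg (frobNorm_nonneg C) (frobNorm_nonneg D)) hm)
  calc (commCentrality C g k * commCentrality D g k) ^ 2
      = commCentrality C g k ^ 2 * commCentrality D g k ^ 2 := mul_pow ..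
    _ ≤ frobNorm C ^ 2 / m * (frobNorm D ^ 2 / m) :=
        mul_le_mul (sq_commCentrality_le C g k) (sq_commCentrality_le D g k) (sq_nonneg _)
          (div_nonneg (sq_nonneg _) hm)
    _ = (frobNorm C * frobNorm D / m) ^ 2 := by ring

theorem sq_commCentrality_sub_sq_add_le (C D : Matrix (Fin N) (Fin L) ℝ) (g : Fin N → Fin R)
    (k : Fin N) :
    commCentrality C g k ^ 2 - commCentrality (C + D) g k ^ 2 ≤
      2 * frobNorm C * frobNorm D / L * (1 / commSize g (g k)) := by
  rw [commCentrality_add]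
  calc _ ≤ 2 * |commCentrality C g k * commCentrality D g k| := by
        nlinarith [neg_abs_le (commCentrality C g k * commCentrality D g k),
          sq_nonneg (commCentrality D g k)]
    _ ≤ 2 * (frobNorm C * frobNorm D / (L * commSize g (g k))) := by
        gcongr; exact abs_commCentrality_mul_le C D g k
    _ = _ := by ring

theorem sum_one_div_commSize_le {ε : ℝ} (hε : 0 < ε) (g : Fin N → Fin R)
    (hsize : ∀ r : Fin R, ε * N ≤ (commSize g r : ℝ)) :
    ∑ k, 1 / (commSize g (g k) : ℝ) ≤ 1 / ε := by
  calc ∑ k, 1 / (commSize g (g k) : ℝ)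
      ≤ ∑ _k : Fin N, 1 / (ε * N) := sum_le_sum fun k _ =>
        one_div_le_one_div_of_le (by have := k.pos; positivity) (hsize (g k))
    _ = 1 / ε * (N / N) := by rw [sum_const, card_univ, Fintype.card_fin, nsmul_eq_mul]; ring
    _ ≤ 1 / ε := mul_le_of_le_one_right (by positivity) (div_self_le_one _)

end

/-- If every community has size at least `ε N` with `ε ∈ (0,1]`, then the community-based
centrality vectors `Z, Ẑ` of `C, Ĉ` satisfy
`(1/N) ẐᵀẐ ≥ (1/N) ZᵀZ - (2R²/(N L ε²)) ‖C‖_F ‖Ĉ - C‖_F`. -/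
theorem sq_norm_commCentrality_hat_lower_bound
    (N L R : ℕ) (C Chat : Matrix (Fin N) (Fin L) ℝ) (g : Fin N → Fin R)
    (ε : ℝ) (hε : 0 < ε) (hε1 : ε ≤ 1)
    (hsize : ∀ r : Fin R, ε * N ≤ (commSize g r : ℝ)) :
    (1 / (N : ℝ)) * ∑ k, (commCentrality C g k) ^ 2
        - (2 * (R : ℝ) ^ 2 / ((N : ℝ) * (L : ℝ) * ε ^ 2)) * frobNorm C * frobNorm (Chat - C)
      ≤ (1 / (N : ℝ)) * ∑ k, (commCentrality Chat g k) ^ 2 := by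
  rcases N.eq_zero_or_pos with rfl | hN
  · simp
  have hR : (1 : ℝ) ≤ R := by exact_mod_cast (g ⟨0, hN⟩).pos
  set K := frobNorm C * frobNorm (Chat - C)
  have hK : 0 ≤ K := mul_nonneg (frobNorm_nonneg C) (frobNorm_nonneg (Chat - C))
  have hsum : ∑ k, commCentrality C g k ^ 2 - ∑ k, commCentrality Chat g k ^ 2 ≤
      2 * K / L * (1 / ε) := by
    rw [← sum_sub_distrib]
    calc _ ≤ ∑ k, 2 * K / L * (1 / commSize g (g k)) := sum_le_sum fun k _ => by
          simpa only [add_sub_cancel, mul_assoc] using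
            sq_commCentrality_sub_sq_add_le C (Chat - C) g k
      _ ≤ 2 * K / L * (1 / ε) := by
          rw [← mul_sum]; gcongr; exact sum_one_div_commSize_le hε g hsize
  have hεR : 1 ≤ (R : ℝ) ^ 2 / ε :=
    (one_le_div hε).2 (hε1.trans (hR.trans (le_self_pow₀ hR two_ne_zero)))
  calc _ = 1 / (N : ℝ) *
          (∑ k, commCentrality C g k ^ 2 - 2 * K / L * (1 / ε) * (R ^ 2 / ε)) := by ring
    _ ≤ 1 / (N : ℝ) * (∑ k, commCentrality C g k ^ 2 - 2 * K / L * (1 / ε)) :=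
        mul_le_mul_of_nonneg_left (sub_le_sub_left (le_mul_of_one_le_right (by positivity) hεR) _)
          (by positivity)
    _ ≤ _ := by gcongr; linarith
end
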